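/- arXiv:2208.12022 — 2 statements merged into one kernel-verified Lean document; each statement's English description precedes it below -/
import Mathlib

section
/- Let A_1,…,A_M ∈ ℝ^{n×n}, G a stochastic graph, and F = {f_a} a Lyapunov multi-function for (A,G) with respect to ρ, i.e., ∏_{i,b} f_b(A_i x)^{p_{a,b,i}} ≤ ρ f_a(x) for all x, a. Then for every K ≥ 1 the same family F is a Lyapunov multi-function for the K-step lift with respect to ρ^K: ∏_{î∈⟨M⟩^K} ∏_{b∈S} f_b(A(î)x)^{p^K_{a,b,î}} ≤ ρ^K f_a(x) for all x ∈ ℝⁿ and a ∈ S. -/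
/-- K-step lift weights. -/
noncomputable def pK {S ι : Type*} [Fintype S] [DecidableEq S] (p : S → S → ι → ℝ) :
    (K : ℕ) → S → S → (Fin K → ι) → ℝ
  | 0, a, b, _ => if a = b then 1 else 0
  | K + 1, a, b, w => ∑ c, pK p K a c (Fin.init w) * p c b (w (Fin.last K))

/-- `A(w) = A_{w_{K-1}} ⋯ A_{w_0}`. -/
noncomputable def Aw {ι : Type*} {n : ℕ} (A : ι → Matrix (Fin n) (Fin n) ℝ) :
    (k : ℕ) → (Fin k → ι) → Matrix (Fin n) (Fin n) ℝ
  | 0, _ => 1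
  | k + 1, w => A (w (Fin.last k)) * Aw A k (Fin.init w)

/-! Induct on `K`. Splitting a word of length `K + 1` as `(v, i)`, the recursion for `pK` turns the
exponent of `f b (A i * Aw A K v *ᵥ x)` into `∑ c, pK p K a c v * p c b i`, so the `(K + 1)`-step
product regroups as `∏ v, ∏ c, L c (Aw A K v *ᵥ x) ^ pK p K a c v`, where `L c y` is the one-step
product bounded by `ρ * f c y`. Since the weights `pK p K a` sum to `1`, the factor `ρ` comes out
once, leaving `ρ` times the `K`-step product. -/

open Finset Matrix

@[to_additive]
theorem Fin.prod_pi_succ_snoc {ι M : Type*} [Fintype ι] [CommMonoid M] (K : ℕ)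
    (g : (Fin (K + 1) → ι) → M) :
    ∏ w, g w = ∏ v : Fin K → ι, ∏ i, g (Fin.snoc v i) := by
  rw [← (Fin.snocEquiv fun _ => ι).prod_comp, Fintype.prod_prod_type, prod_comm]
  rfl

theorem Real.prod_rpow_sum_mul {α β : Type*} [Fintype α] [Fintype β] {x : β → ℝ}
    {q : α → ℝ} {r : α → β → ℝ} (hx : ∀ b, 0 ≤ x b) (hq : ∀ c, 0 ≤ q c)
    (hr : ∀ c b, 0 ≤ r c b) :
    ∏ b, x b ^ (∑ c, q c * r c b) = ∏ c, (∏ b, x b ^ r c b) ^ q c := by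
  calc ∏ b, x b ^ (∑ c, q c * r c b)
      = ∏ b, ∏ c, (x b ^ r c b) ^ q c := by
        refine prod_congr rfl fun b _ => ?_
        rw [Real.rpow_sum_of_nonneg (hx b) fun c _ => mul_nonneg (hq c) (hr c b)]
        simp_rw [mul_comm (q _), Real.rpow_mul (hx b)]
    _ = ∏ c, (∏ b, x b ^ r c b) ^ q c := by
        rw [prod_comm]
        refine prod_congr rfl fun c _ => ?_
        exact Real.finsetProd_rpow _ _ (fun b _ => Real.rpow_nonneg (hx b) _) _

theorem Real.prod_mul_rpow {α : Type*} [Fintype α] {ρ : ℝ} {x e : α → ℝ} (hρ : 0 ≤ ρ)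
    (hx : ∀ c, 0 ≤ x c) (he : ∀ c, 0 ≤ e c) :
    ∏ c, (ρ * x c) ^ e c = ρ ^ (∑ c, e c) * ∏ c, x c ^ e c := by
  simp_rw [Real.mul_rpow hρ (hx _), prod_mul_distrib,
    Real.rpow_sum_of_nonneg hρ fun c _ => he c]

section Lift

variable {S ι : Type*} [Fintype S] [DecidableEq S]

theorem pK_nonneg {p : S → S → ι → ℝ} (hp : ∀ a b i, 0 ≤ p a b i) :
    ∀ (K : ℕ) (a b : S) (w : Fin K → ι), 0 ≤ pK p K a b w
  | 0, a, b, w => by unfold pK; split_ifs <;> norm_num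
  | K + 1, a, b, w => sum_nonneg fun c _ => mul_nonneg (pK_nonneg hp K a c _) (hp c b _)

@[simp]
theorem pK_snoc (p : S → S → ι → ℝ) (K : ℕ) (a b : S) (v : Fin K → ι) (i : ι) :
    pK p (K + 1) a b (Fin.snoc v i) = ∑ c, pK p K a c v * p c b i := by
  simp [pK]

@[simp]
theorem Aw_snoc {n : ℕ} (A : ι → Matrix (Fin n) (Fin n) ℝ) (K : ℕ) (v : Fin K → ι) (i : ι) :
    Aw A (K + 1) (Fin.snoc v i) = A i * Aw A K v := by
  simp [Aw]

theorem sum_pK [Fintype ι] {p : S → S → ι → ℝ} (hstoch : ∀ a : S, ∑ b, ∑ i, p a b i = 1) :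
    ∀ (K : ℕ) (a : S), ∑ w : Fin K → ι, ∑ b, pK p K a b w = 1
  | 0, a => by simp [pK]
  | K + 1, a => by
    rw [Fin.sum_pi_succ_snoc]
    simp only [pK_snoc]
    calc ∑ v : Fin K → ι, ∑ i, ∑ b, ∑ c, pK p K a c v * p c b i
        = ∑ v : Fin K → ι, ∑ c, pK p K a c v * ∑ b, ∑ i, p c b i := by
          refine sum_congr rfl fun v _ => ?_
          simp_rw [mul_sum]
          rw [sum_comm]
          exact (sum_congr rfl fun _ _ => sum_comm).trans sum_comm
      _ = 1 := by simp [hstoch, sum_pK hstoch K a]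

theorem prod_rpow_pK_succ [Fintype ι] {n : ℕ} {A : ι → Matrix (Fin n) (Fin n) ℝ}
    {p : S → S → ι → ℝ} (hp : ∀ a b i, 0 ≤ p a b i) {f : S → (Fin n → ℝ) → ℝ}
    (hf : ∀ a y, 0 ≤ f a y) (K : ℕ) (a : S) (x : Fin n → ℝ) :
    ∏ w : Fin (K + 1) → ι, ∏ b, f b (Aw A (K + 1) w *ᵥ x) ^ pK p (K + 1) a b w =
      ∏ v : Fin K → ι, ∏ c,
        (∏ i, ∏ b, f b (A i *ᵥ (Aw A K v *ᵥ x)) ^ p c b i) ^ pK p K a c v := by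
  rw [Fin.prod_pi_succ_snoc]
  refine prod_congr rfl fun v _ => ?_
  simp only [pK_snoc, Aw_snoc, ← mulVec_mulVec]
  simp only [← Fintype.prod_prod_type']
  exact Real.prod_rpow_sum_mul (fun _ => hf _ _) (fun c => pK_nonneg hp K a c v)
    (fun c _ => hp _ _ _)

theorem prod_Aw_rpow_pK_le [Fintype ι] {n : ℕ} {A : ι → Matrix (Fin n) (Fin n) ℝ}
    {p : S → S → ι → ℝ} (hp : ∀ a b i, 0 ≤ p a b i) (hstoch : ∀ a, ∑ b, ∑ i, p a b i = 1)
    {ρ : ℝ} (hρ : 0 ≤ ρ) {f : S → (Fin n → ℝ) → ℝ} (hf : ∀ a y, 0 ≤ f a y)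
    (hLMF : ∀ a x, ∏ i, ∏ b, f b (A i *ᵥ x) ^ p a b i ≤ ρ * f a x) (x : Fin n → ℝ) :
    ∀ (K : ℕ) (a : S),
      ∏ w : Fin K → ι, ∏ b, f b (Aw A K w *ᵥ x) ^ pK p K a b w ≤ ρ ^ K * f a x
  | 0, a => by simp [Aw, pK]
  | K + 1, a => by
    have hq := pK_nonneg hp K a
    have hL : ∀ c y, 0 ≤ ∏ i, ∏ b, f b (A i *ᵥ y) ^ p c b i := fun c y =>
      prod_nonneg fun i _ => prod_nonneg fun b _ => Real.rpow_nonneg (hf b _) _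
    calc _ = ∏ v : Fin K → ι, ∏ c,
          (∏ i, ∏ b, f b (A i *ᵥ (Aw A K v *ᵥ x)) ^ p c b i) ^ pK p K a c v :=
          prod_rpow_pK_succ hp hf K a x
      _ ≤ ∏ v : Fin K → ι, ∏ c, (ρ * f c (Aw A K v *ᵥ x)) ^ pK p K a c v := by
          refine prod_le_prod (fun v _ => prod_nonneg fun c _ => Real.rpow_nonneg (hL c _) _)
            fun v _ => prod_le_prod (fun c _ => Real.rpow_nonneg (hL c _) _)
              fun c _ => Real.rpow_le_rpow (hL c _) (hLMF c _) (hq c v)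
      _ = ρ * ∏ v : Fin K → ι, ∏ c, f c (Aw A K v *ᵥ x) ^ pK p K a c v := by
          simp only [← Fintype.prod_prod_type' (fun v c => (_ : ℝ) ^ pK p K a c v)]
          rw [Real.prod_mul_rpow hρ (fun _ => hf _ _) (fun _ => hq _ _),
            Fintype.sum_prod_type, sum_pK hstoch, Real.rpow_one]
      _ ≤ ρ * (ρ ^ K * f a x) :=
          mul_le_mul_of_nonneg_left (prod_Aw_rpow_pK_le hp hstoch hρ hf hLMF x K a) hρ
      _ = ρ ^ (K + 1) * f a x := by ring

end Lift

theorem LMF_step_lift_general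
    {S : Type*} [Fintype S] [DecidableEq S] (M n : ℕ)
    (A : Fin M → Matrix (Fin n) (Fin n) ℝ)
    (p : S → S → Fin M → ℝ)
    (hnonneg : ∀ a b i, 0 ≤ p a b i)
    (hstoch : ∀ a : S, ∑ b : S, ∑ i : Fin M, p a b i = 1)
    (ρ : ℝ) (hρ : 0 ≤ ρ)
    (f : S → (Fin n → ℝ) → ℝ)
    (hpos : ∀ a x, x ≠ 0 → 0 < f a x) (hzero : ∀ a, f a 0 = 0)
    (hLMF : ∀ (a : S) (x : Fin n → ℝ),
      ∏ i : Fin M, ∏ b : S, f b ((A i).mulVec x) ^ p a b i ≤ ρ * f a x)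
    (K : ℕ) (a : S) (x : Fin n → ℝ) :
    ∏ w : Fin K → Fin M, ∏ b : S, f b ((Aw A K w).mulVec x) ^ pK p K a b w
      ≤ ρ ^ K * f a x := by
  have hf : ∀ b y, 0 ≤ f b y := fun b y => by
    rcases eq_or_ne y 0 with rfl | hy
    · exact (hzero b).ge
    · exact (hpos b y hy).le
  exact prod_Aw_rpow_pK_le hnonneg hstoch hρ hf hLMF x K a

/-- a Lyapunov multi-function for `(A, G)` w.r.t. `ρ` is a
Lyapunov multi-function for the K-step lift w.r.t. `ρ^K`.  `x ^ r` for real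
`r` denotes `Real.rpow`. -/
theorem LMF_step_lift
    {S : Type*} [Fintype S] [DecidableEq S] (M n : ℕ)
    (A : Fin M → Matrix (Fin n) (Fin n) ℝ)
    (p : S → S → Fin M → ℝ)
    (hnonneg : ∀ a b i, 0 ≤ p a b i)
    (hstoch : ∀ a : S, ∑ b : S, ∑ i : Fin M, p a b i = 1)
    (ρ : ℝ) (hρ : 0 ≤ ρ)
    (f : S → (Fin n → ℝ) → ℝ)
    (hcont : ∀ a, Continuous (f a))
    (hpos : ∀ a x, x ≠ 0 → 0 < f a x) (hzero : ∀ a, f a 0 = 0)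
    (hhom : ∀ a (c : ℝ) x, 0 ≤ c → f a (c • x) = c * f a x)
    (hLMF : ∀ (a : S) (x : Fin n → ℝ),
      ∏ i : Fin M, ∏ b : S, f b ((A i).mulVec x) ^ p a b i ≤ ρ * f a x)
    (K : ℕ) (hK : 1 ≤ K) (a : S) (x : Fin n → ℝ) :
    ∏ w : Fin K → Fin M, ∏ b : S, f b ((Aw A K w).mulVec x) ^ pK p K a b w
      ≤ ρ ^ K * f a x :=
  LMF_step_lift_general M n A p hnonneg hstoch ρ hρ f hpos hzero hLMF K a x
end

section
/- K-th root scaling of the probabilistic spectral radius under step lift: Let A_1,…,A_M ∈ ℝ^{n×n}, G a stochastic graph, ξ a distribution on S, K ≥ 1, and define ρ_0(A,G,ξ) := limsup_{k→∞} (∏_{î∈⟨M⟩^k} ‖A(î)‖^{μ_{G,ξ}(î)})^{1/k}. If all matrices A_i are invertible (so all norms are positive), then ρ_0(A^K, G^K, ξ) = ρ_0(A, G, ξ)^K, where A^K := {A(î) : î ∈ ⟨M⟩^K} indexed by words of length K and G^K is the K-step lift. -/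
/-- `ℙ_{G,ξ}(s, w)`. -/
noncomputable def PP {S ι : Type*} [Fintype S] (p : S → S → ι → ℝ) (ξ : S → ℝ) :
    (k : ℕ) → S → (Fin k → ι) → ℝ
  | 0, s, _ => ξ s
  | k + 1, s, w => ∑ a, PP p ξ k a (Fin.init w) * p a s (w (Fin.last k))

/-- The induced word distribution `μ_{G,ξ}`. -/
noncomputable def muWord {S ι : Type*} [Fintype S] (p : S → S → ι → ℝ) (ξ : S → ℝ)
    (k : ℕ) (w : Fin k → ι) : ℝ := ∑ s : S, PP p ξ k s w

/-- The operator norm of a matrix induced by the Euclidean norm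
(a submultiplicative matrix norm). -/
noncomputable def euclOpNorm {n : ℕ} (B : Matrix (Fin n) (Fin n) ℝ) : ℝ :=
  ‖(Matrix.toEuclideanLin B).toContinuousLinearMap‖

/-- The probabilistic spectral radius
`ρ₀(A,G,ξ) = limsup_k (∏_{w ∈ ι^k} ‖A(w)‖^{μ_{G,ξ}(w)})^{1/k}`. -/
noncomputable def rho0 {S ι : Type*} [Fintype S] [Fintype ι] {n : ℕ}
    (A : ι → Matrix (Fin n) (Fin n) ℝ) (p : S → S → ι → ℝ) (ξ : S → ℝ) : ℝ :=
  Filter.atTop.limsup fun k : ℕ =>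
    (∏ w : Fin k → ι, euclOpNorm (Aw A k w) ^ muWord p ξ k w) ^ ((1 : ℝ) / k)

/-!
Write `F m = ∏_{w ∈ ⟨M⟩^m} ‖A(w)‖^{μ_{G,ξ}(w)}`. Cutting a word of length `K k` into `k` blocks
of length `K` identifies `A^K(W)` with `A(w)` and, by the Markov property of the path weights,
`μ_{G^K,ξ}(W)` with `μ_{G,ξ}(w)`; so the product for `(A^K, G^K, ξ)` at time `k` is `F (K k)`,
and `ρ₀(A^K, G^K, ξ) = (limsup_k F(K k)^{1/(K k)})^K`.

It remains to see that sampling `F(m)^{1/m}` along multiples of `K` does not change its limsup.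
When the `A_i` are invertible, `log F(m) = E_μ log ‖A(w)‖` changes by at most a constant from
`m` to `m + 1`, because `‖A_i B‖` lies between `‖B‖ / ‖A_i⁻¹‖` and `‖A_i‖ ‖B‖`; so
`log F(m) / m` moves by `O(K / m)` between `m` and the largest multiple of `K` below it.
For `n = 0` all norms vanish and both sides are `0`.
-/

open Filter Real Topology
open scoped Matrix.Norms.L2Operator

section Sequences

lemma isBoundedUnder_of_forall_abs_le {α : Type*} (l : Filter α) {u : α → ℝ} {B : ℝ}
    (hu : ∀ x, |u x| ≤ B) : IsBoundedUnder (· ≤ ·) l u ∧ IsBoundedUnder (· ≥ ·) l u :=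
  isBoundedUnder_le_abs.mp (isBoundedUnder_of ⟨B, hu⟩)

lemma limsup_eq_of_tendsto_sub {α : Type*} {l : Filter α} [l.NeBot] {f g : α → ℝ} {B : ℝ}
    (hf : ∀ x, |f x| ≤ B) (hg : ∀ x, |g x| ≤ B) (h : Tendsto (f - g) l (𝓝 0)) :
    limsup f l = limsup g l := by
  have hf' := isBoundedUnder_of_forall_abs_le l hf
  have hg' := isBoundedUnder_of_forall_abs_le l hg
  have h' : Tendsto (g - f) l (𝓝 0) := by
    rw [← neg_sub, ← neg_zero]
    exact h.neg
  have hfg : f = g + (f - g) := by abel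
  have hgf : g = f + (g - f) := by abel
  apply le_antisymm
  · calc limsup f l ≤ limsup g l + limsup (f - g) l := by
          conv_lhs => rw [hfg]
          exact limsup_add_le hg'.2 hg'.1 h.isBoundedUnder_ge.isCoboundedUnder_le
            h.isBoundedUnder_le
      _ = limsup g l := by rw [h.limsup_eq, add_zero]
  · calc limsup g l ≤ limsup f l + limsup (g - f) l := by
          conv_lhs => rw [hgf]
          exact limsup_add_le hf'.2 hf'.1 h'.isBoundedUnder_ge.isCoboundedUnder_le
            h'.isBoundedUnder_le
      _ = limsup f l := by rw [h'.limsup_eq, add_zero]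

variable {a : ℕ → ℝ} {L : ℝ}

lemma abs_sub_le_mul_of_abs_succ_sub_le (ha : ∀ m, |a (m + 1) - a m| ≤ L) {m j : ℕ}
    (hmj : m ≤ j) :
    |a j - a m| ≤ L * (j - m) := by
  have h := dist_le_Ico_sum_of_dist_le (f := a) hmj (d := fun _ => L) fun {k} _ _ => by
    rw [Real.dist_eq, abs_sub_comm]; exact ha k
  rw [Finset.sum_const, Nat.card_Ico, nsmul_eq_mul, Nat.cast_sub hmj, Real.dist_eq,
    abs_sub_comm] at h
  linarith

lemma abs_div_le_of_abs_succ_sub_le (ha : ∀ m, |a (m + 1) - a m| ≤ L) (m : ℕ) :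
    |a m / m| ≤ |a 0| + L := by
  rcases Nat.eq_zero_or_pos m with rfl | hm
  · simpa using add_nonneg (abs_nonneg (a 0)) ((abs_nonneg _).trans (ha 0))
  have hm' : (1 : ℝ) ≤ m := by exact_mod_cast hm
  have h := abs_sub_le_mul_of_abs_succ_sub_le ha (Nat.zero_le m)
  rw [Nat.cast_zero, sub_zero] at h
  rw [abs_div, Nat.abs_cast, div_le_iff₀ (by positivity)]
  have hL : 0 ≤ L := (abs_nonneg _).trans (ha 0)
  nlinarith [abs_sub_abs_le_abs_sub (a m) (a 0), abs_nonneg (a 0)]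

lemma abs_div_sub_div_le_of_abs_succ_sub_le (ha : ∀ m, |a (m + 1) - a m| ≤ L) {j m : ℕ}
    (hj : 0 < j) (hjm : j ≤ m) :
    |a m / m - a j / j| ≤ (|a 0| + 2 * L) * (m - j) / m := by
  have hj' : (0 : ℝ) < j := by exact_mod_cast hj
  have hm' : (0 : ℝ) < m := by exact_mod_cast hj.trans_le hjm
  have hmj : (0 : ℝ) ≤ m - j := sub_nonneg.mpr (by exact_mod_cast hjm)
  have key : a m / m - a j / j = ((a m - a j) - a j / j * (m - j)) / m := by
    field_simp
    ring
  rw [key, abs_div, Nat.abs_cast, div_le_div_iff_of_pos_right hm']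
  calc |a m - a j - a j / j * (m - j)| ≤ |a m - a j| + |a j / j| * (m - j) := by
        refine (abs_sub _ _).trans (le_of_eq ?_)
        rw [abs_mul, abs_of_nonneg hmj]
    _ ≤ L * (m - j) + (|a 0| + L) * (m - j) := by
        gcongr
        · exact abs_sub_le_mul_of_abs_succ_sub_le ha hjm
        · exact abs_div_le_of_abs_succ_sub_le ha j
    _ = (|a 0| + 2 * L) * (m - j) := by ring

lemma limsup_div_mul_eq_of_abs_succ_sub_le (ha : ∀ m, |a (m + 1) - a m| ≤ L) {K : ℕ}
    (hK : 0 < K) :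
    limsup (fun k : ℕ => a (K * k) / (K * k : ℕ)) atTop
      = limsup (fun m : ℕ => a m / m) atTop := by
  set u : ℕ → ℝ := fun m => a m / m
  have hu := abs_div_le_of_abs_succ_sub_le ha
  have hclose : Tendsto (fun m => u m - u (K * (m / K))) atTop (𝓝 0) := by
    refine squeeze_zero_norm' ?_ (tendsto_const_div_atTop_nhds_zero_nat ((|a 0| + 2 * L) * K))
    filter_upwards [eventually_ge_atTop K] with m hm
    have hj : 0 < K * (m / K) := Nat.mul_pos hK (Nat.div_pos hm hK)
    have hjm : K * (m / K) ≤ m := Nat.mul_div_le m K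
    have hgap : (m : ℝ) - (K * (m / K) : ℕ) ≤ K := by
      have := Nat.lt_mul_div_succ m hK
      rw [sub_le_iff_le_add]; exact_mod_cast (by lia : m ≤ K + K * (m / K))
    refine (abs_div_sub_div_le_of_abs_succ_sub_le ha hj hjm).trans ?_
    rw [mul_div_assoc, mul_div_assoc]
    gcongr
    · exact add_nonneg (abs_nonneg _) (mul_nonneg zero_le_two ((abs_nonneg _).trans (ha 0)))
  calc limsup (fun k => u (K * k)) atTop
        = limsup (fun k => u (K * k)) (map (· / K) atTop) := by rw [map_div_atTop_eq_nat K hK]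
    _ = limsup (fun m => u (K * (m / K))) atTop := rfl
    _ = limsup u atTop := (limsup_eq_of_tendsto_sub hu (fun m => hu _) hclose).symm

end Sequences

section Roots

lemma limsup_zero_rpow_one_div : limsup (fun k : ℕ => (0 : ℝ) ^ ((1 : ℝ) / k)) atTop = 0 := by
  have h : (fun k : ℕ => (0 : ℝ) ^ ((1 : ℝ) / k)) =ᶠ[atTop] fun _ => 0 := by
    filter_upwards [eventually_ge_atTop 1] with k hk
    exact zero_rpow (one_div_ne_zero (by positivity))
  rw [limsup_congr h, limsup_const]

lemma limsup_rpow_one_div_mul_eq_pow {F : ℕ → ℝ} (hF : ∀ m, 0 < F m) {L : ℝ}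
    (hL : ∀ m, |log (F (m + 1)) - log (F m)| ≤ L) {K : ℕ} (hK : 0 < K) :
    limsup (fun k : ℕ => F (K * k) ^ ((1 : ℝ) / k)) atTop
      = limsup (fun m : ℕ => F m ^ ((1 : ℝ) / m)) atTop ^ K := by
  set u : ℕ → ℝ := fun m => log (F m) / m
  have hu : ∀ m, |u m| ≤ _ := abs_div_le_of_abs_succ_sub_le (a := fun m => log (F m)) hL
  have hsample : limsup (fun k => u (K * k)) atTop = limsup u atTop :=
    limsup_div_mul_eq_of_abs_succ_sub_le (a := fun m => log (F m)) hL hK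
  have hroot : ∀ m : ℕ, F m ^ ((1 : ℝ) / m) = exp (u m) := fun m => by
    rw [rpow_def_of_pos (hF m), mul_one_div]
  have hroot_mul : ∀ k : ℕ, F (K * k) ^ ((1 : ℝ) / k) = exp (K * u (K * k)) := fun k => by
    have hK' : (K : ℝ) ≠ 0 := by exact_mod_cast hK.ne'
    rw [rpow_def_of_pos (hF _)]
    simp only [u]
    rw [mul_one_div, Nat.cast_mul, ← mul_div_assoc, mul_div_mul_left _ _ hK']
  have hbdd := isBoundedUnder_of_forall_abs_le atTop hu
  have hbdd_mul := isBoundedUnder_of_forall_abs_le atTop fun k => hu (K * k)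
  have hexp : limsup (fun m => exp (u m)) atTop = exp (limsup u atTop) :=
    (exp_monotone.map_limsup_of_continuousAt u continuous_exp.continuousAt hbdd.1
      hbdd.2.isCoboundedUnder_le).symm
  have hexp_mul : limsup (fun k => exp (K * u (K * k))) atTop
      = exp (K * limsup (fun k => u (K * k)) atTop) :=
    (Monotone.map_limsup_of_continuousAt (f := fun x => exp (K * x))
      (fun x y hxy => exp_le_exp.mpr (by gcongr)) _ (by fun_prop) hbdd_mul.1
      hbdd_mul.2.isCoboundedUnder_le).symm
  simp only [hroot_mul, hroot]
  rw [hexp, hexp_mul, hsample, exp_nat_mul]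

end Roots

lemma abs_log_norm_unit_mul_sub_le {R : Type*} [NormedRing R] (u : Rˣ) {b : R} (hb : b ≠ 0) :
    |log ‖(u : R) * b‖ - log ‖b‖| ≤ |log ‖(u : R)‖| + |log ‖(↑u⁻¹ : R)‖| := by
  have : Nontrivial R := ⟨⟨b, 0, hb⟩⟩
  have hub : 0 < ‖(u : R) * b‖ := norm_pos_iff.mpr ((Units.mul_right_eq_zero u).not.mpr hb)
  have hb' : 0 < ‖b‖ := norm_pos_iff.mpr hb
  have hu : 0 < ‖(u : R)‖ := norm_pos_iff.mpr u.ne_zero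
  have hu' : 0 < ‖(↑u⁻¹ : R)‖ := norm_pos_iff.mpr u⁻¹.ne_zero
  have upper : log ‖(u : R) * b‖ ≤ log ‖(u : R)‖ + log ‖b‖ := by
    rw [← log_mul hu.ne' hb'.ne']
    exact log_le_log hub (norm_mul_le _ _)
  have lower : log ‖b‖ ≤ log ‖(↑u⁻¹ : R)‖ + log ‖(u : R) * b‖ := by
    rw [← log_mul hu'.ne' hub.ne']
    refine log_le_log hb' ?_
    calc ‖b‖ = ‖(↑u⁻¹ : R) * ((u : R) * b)‖ := by rw [Units.inv_mul_cancel_left]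
      _ ≤ _ := norm_mul_le _ _
  rw [abs_sub_le_iff]
  constructor <;> linarith [le_abs_self (log ‖(u : R)‖), le_abs_self (log ‖(↑u⁻¹ : R)‖),
    abs_nonneg (log ‖(u : R)‖), abs_nonneg (log ‖(↑u⁻¹ : R)‖)]

section Words

variable {S ι : Type*} [Fintype S]

lemma Aw_add {n : ℕ} (A : ι → Matrix (Fin n) (Fin n) ℝ) (m : ℕ) :
    ∀ (l : ℕ) (u : Fin (m + l) → ι),
      Aw A (m + l) u = Aw A l (fun j => u (Fin.natAdd m j)) * Aw A m (fun j => u (Fin.castAdd l j))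
  | 0, u => (one_mul _).symm
  | l + 1, u => by
      change A (u (Fin.last (m + l))) * Aw A (m + l) (Fin.init u) = _
      rw [Aw_add A m l (Fin.init u)]
      exact (mul_assoc _ _ _).symm

lemma isUnit_Aw {n : ℕ} {A : ι → Matrix (Fin n) (Fin n) ℝ} (hA : ∀ i, IsUnit (A i)) :
    ∀ (k : ℕ) (w : Fin k → ι), IsUnit (Aw A k w)
  | 0, _ => isUnit_one
  | k + 1, w => (hA _).mul (isUnit_Aw hA k (Fin.init w))

lemma PP_add [DecidableEq S] (p : S → S → ι → ℝ) (ξ : S → ℝ) (m : ℕ) :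
    ∀ (l : ℕ) (s : S) (u : Fin (m + l) → ι),
      PP p ξ (m + l) s u
        = ∑ a, PP p ξ m a (fun j => u (Fin.castAdd l j))
            * pK p l a s (fun j => u (Fin.natAdd m j))
  | 0, s, u => by
      simp only [pK, mul_ite, mul_one, mul_zero, Finset.sum_ite_eq', Finset.mem_univ, if_true]
      rfl
  | l + 1, s, u => by
      change ∑ a, PP p ξ (m + l) a (Fin.init u) * p a s (u (Fin.last (m + l))) = _
      simp only [PP_add p ξ m l _ (Fin.init u), Finset.sum_mul, pK, Finset.mul_sum, mul_assoc]
      exact Finset.sum_comm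

lemma PP_snoc (p : S → S → ι → ℝ) (ξ : S → ℝ) (k : ℕ) (s : S) (w : Fin k → ι)
    (i : ι) :
    PP p ξ (k + 1) s (Fin.snoc w i) = ∑ a, PP p ξ k a w * p a s i := by
  simp only [PP, Fin.snoc_last, Fin.init_snoc]

end Words

section WordMeasure

variable {S ι : Type*} [Fintype S] (p : S → S → ι → ℝ) (ξ : S → ℝ)

lemma sum_fun_fin_succ [Fintype ι] {M : Type*} [AddCommMonoid M] (k : ℕ)
    (g : (Fin (k + 1) → ι) → M) :
    ∑ w, g w = ∑ w : Fin k → ι, ∑ i, g (Fin.snoc w i) := by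
  rw [← (Fin.snocEquiv fun _ => ι).sum_comp, Fintype.sum_prod_type, Finset.sum_comm]
  rfl

lemma PP_nonneg (hξ : ∀ s, 0 ≤ ξ s) (hp : ∀ a b i, 0 ≤ p a b i) :
    ∀ (k : ℕ) (s : S) (w : Fin k → ι), 0 ≤ PP p ξ k s w
  | 0, s, _ => hξ s
  | k + 1, s, w => Finset.sum_nonneg fun a _ =>
      mul_nonneg (PP_nonneg hξ hp k a (Fin.init w)) (hp a s _)

lemma muWord_nonneg (hξ : ∀ s, 0 ≤ ξ s) (hp : ∀ a b i, 0 ≤ p a b i) (k : ℕ)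
    (w : Fin k → ι) :
    0 ≤ muWord p ξ k w :=
  Finset.sum_nonneg fun s _ => PP_nonneg p ξ hξ hp k s w

lemma sum_muWord_snoc [Fintype ι] (hp : ∀ a, ∑ b, ∑ i, p a b i = 1) (k : ℕ)
    (w : Fin k → ι) :
    ∑ i, muWord p ξ (k + 1) (Fin.snoc w i) = muWord p ξ k w := by
  simp only [muWord, PP_snoc]
  calc ∑ i, ∑ s, ∑ a, PP p ξ k a w * p a s i
        = ∑ a, PP p ξ k a w * ∑ s, ∑ i, p a s i := by
        simp only [Finset.mul_sum]
        rw [Finset.sum_comm]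
        simp only [Finset.sum_comm (γ := ι)]
        rw [Finset.sum_comm]
    _ = ∑ a, PP p ξ k a w := by simp only [hp, mul_one]

lemma sum_muWord_succ_mul_init [Fintype ι] (hp : ∀ a, ∑ b, ∑ i, p a b i = 1) (k : ℕ)
    (g : (Fin k → ι) → ℝ) :
    ∑ v : Fin (k + 1) → ι, muWord p ξ (k + 1) v * g (Fin.init v)
      = ∑ w, muWord p ξ k w * g w := by
  simp only [sum_fun_fin_succ, Fin.init_snoc, ← Finset.sum_mul, sum_muWord_snoc p ξ hp]

lemma sum_muWord [Fintype ι] (hξ : ∑ s, ξ s = 1) (hp : ∀ a, ∑ b, ∑ i, p a b i = 1) :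
    ∀ k, ∑ w : Fin k → ι, muWord p ξ k w = 1
  | 0 => by rw [Fintype.sum_unique]; exact hξ
  | k + 1 => by
      have h := sum_muWord_succ_mul_init p ξ hp k fun _ => 1
      simp only [mul_one] at h
      rw [h, sum_muWord hξ hp k]

end WordMeasure

section BlockLift

variable {S ι : Type*} (K : ℕ)

def blockFlatten : (k : ℕ) → (Fin k → Fin K → ι) ≃ (Fin (K * k) → ι)
  | 0 => Equiv.ofUnique (Fin 0 → Fin K → ι) (Fin 0 → ι)
  | k + 1 => (Fin.snocEquiv fun _ => Fin K → ι).symm.trans <|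
      (Equiv.prodComm _ _).trans <|
        ((blockFlatten k).prodCongr (Equiv.refl _)).trans (Fin.appendEquiv (K * k) K)

variable {K}

lemma blockFlatten_succ (k : ℕ) (W : Fin (k + 1) → Fin K → ι) :
    blockFlatten K (k + 1) W = Fin.append (blockFlatten K k (Fin.init W)) (W (Fin.last k)) :=
  rfl

lemma Aw_blockFlatten {n : ℕ} (A : ι → Matrix (Fin n) (Fin n) ℝ) :
    ∀ (k : ℕ) (W : Fin k → Fin K → ι), Aw (Aw A K) k W = Aw A (K * k) (blockFlatten K k W)
  | 0, _ => rfl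
  | k + 1, W => by
      change _ = Aw A (K * k + K) _
      rw [blockFlatten_succ, Aw_add A (K * k) K]
      simp only [Fin.append_left, Fin.append_right]
      exact congrArg _ (Aw_blockFlatten A k (Fin.init W))

lemma PP_blockFlatten [Fintype S] [DecidableEq S] (p : S → S → ι → ℝ) (ξ : S → ℝ) :
    ∀ (k : ℕ) (s : S) (W : Fin k → Fin K → ι),
      PP (pK p K) ξ k s W = PP p ξ (K * k) s (blockFlatten K k W)
  | 0, _, _ => rfl
  | k + 1, s, W => by
      change _ = PP p ξ (K * k + K) s _
      rw [blockFlatten_succ, PP_add p ξ (K * k) K]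
      simp only [Fin.append_left, Fin.append_right]
      exact Finset.sum_congr rfl fun a _ => by rw [← PP_blockFlatten p ξ k a (Fin.init W)]

lemma muWord_blockFlatten [Fintype S] [DecidableEq S] (p : S → S → ι → ℝ) (ξ : S → ℝ)
    (k : ℕ) (W : Fin k → Fin K → ι) :
    muWord (pK p K) ξ k W = muWord p ξ (K * k) (blockFlatten K k W) :=
  Finset.sum_congr rfl fun s _ => PP_blockFlatten p ξ k s W

end BlockLift

lemma norm_Aw_pos {ι : Type*} {n : ℕ} [NeZero n] {A : ι → Matrix (Fin n) (Fin n) ℝ}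
    (hA : ∀ i, IsUnit (A i)) (k : ℕ) (w : Fin k → ι) : 0 < ‖Aw A k w‖ :=
  norm_pos_iff.mpr (isUnit_Aw hA k w).ne_zero

section GeomMean

variable {S ι : Type*} [Fintype S] [Fintype ι] {n : ℕ}
  (A : ι → Matrix (Fin n) (Fin n) ℝ) (p : S → S → ι → ℝ) (ξ : S → ℝ)

lemma euclOpNorm_eq_norm (B : Matrix (Fin n) (Fin n) ℝ) : euclOpNorm B = ‖B‖ := rfl

noncomputable def wordNormGeomMean (k : ℕ) : ℝ :=
  ∏ w : Fin k → ι, euclOpNorm (Aw A k w) ^ muWord p ξ k w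

lemma rho0_eq_limsup_wordNormGeomMean :
    rho0 A p ξ = limsup (fun k : ℕ => wordNormGeomMean A p ξ k ^ ((1 : ℝ) / k)) atTop :=
  rfl

lemma wordNormGeomMean_blockLift [DecidableEq S] (K k : ℕ) :
    wordNormGeomMean (Aw A K) (pK p K) ξ k = wordNormGeomMean A p ξ (K * k) :=
  Fintype.prod_equiv (blockFlatten K k) _ _ fun W => by
    rw [Aw_blockFlatten, muWord_blockFlatten]

lemma wordNormGeomMean_of_dim_zero (hn : n = 0) (hξ : ∑ s, ξ s = 1)
    (hp : ∀ a, ∑ b, ∑ i, p a b i = 1) (k : ℕ) : wordNormGeomMean A p ξ k = 0 := by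
  subst hn
  obtain ⟨w, -, hw⟩ := Finset.exists_ne_zero_of_sum_ne_zero
    ((sum_muWord p ξ hξ hp k).trans_ne one_ne_zero)
  refine Finset.prod_eq_zero (Finset.mem_univ w) ?_
  rw [euclOpNorm_eq_norm, Subsingleton.elim (Aw A k w) 0, norm_zero, zero_rpow hw]

variable {A} [NeZero n]

lemma wordNormGeomMean_pos (hA : ∀ i, IsUnit (A i)) (k : ℕ) : 0 < wordNormGeomMean A p ξ k :=
  Finset.prod_pos fun w _ => rpow_pos_of_pos (norm_Aw_pos hA k w) _

lemma log_wordNormGeomMean (hA : ∀ i, IsUnit (A i)) (k : ℕ) :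
    log (wordNormGeomMean A p ξ k) = ∑ w, muWord p ξ k w * log ‖Aw A k w‖ := by
  simp only [wordNormGeomMean, euclOpNorm_eq_norm]
  rw [log_prod fun w _ => (rpow_pos_of_pos (norm_Aw_pos hA k w) _).ne']
  exact Finset.sum_congr rfl fun w _ => log_rpow (norm_Aw_pos hA k w) _

end GeomMean

section Increments

variable {S ι : Type*} [Fintype S] [Fintype ι] (p : S → S → ι → ℝ) (ξ : S → ℝ)

lemma abs_sum_muWord_succ_mul_sub_le (hξ0 : ∀ s, 0 ≤ ξ s) (hp0 : ∀ a b i, 0 ≤ p a b i)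
    (hξ1 : ∑ s, ξ s = 1) (hp1 : ∀ a, ∑ b, ∑ i, p a b i = 1)
    (f : (k : ℕ) → (Fin k → ι) → ℝ) {L : ℝ}
    (hf : ∀ k (v : Fin (k + 1) → ι), |f (k + 1) v - f k (Fin.init v)| ≤ L) (k : ℕ) :
    |∑ v, muWord p ξ (k + 1) v * f (k + 1) v - ∑ w, muWord p ξ k w * f k w| ≤ L := by
  rw [← sum_muWord_succ_mul_init p ξ hp1 k (f k), ← Finset.sum_sub_distrib]
  calc _ ≤ ∑ v, muWord p ξ (k + 1) v * L := by
        refine (Finset.abs_sum_le_sum_abs _ _).trans (Finset.sum_le_sum fun v _ => ?_)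
        have hμ := muWord_nonneg p ξ hξ0 hp0 (k + 1) v
        rw [← mul_sub, abs_mul, abs_of_nonneg hμ]
        exact mul_le_mul_of_nonneg_left (hf k v) hμ
    _ = L := by rw [← Finset.sum_mul, sum_muWord p ξ hξ1 hp1, one_mul]

lemma exists_abs_log_wordNormGeomMean_succ_sub_le {n : ℕ} [NeZero n]
    {A : ι → Matrix (Fin n) (Fin n) ℝ} (hA : ∀ i, IsUnit (A i))
    (hξ0 : ∀ s, 0 ≤ ξ s) (hp0 : ∀ a b i, 0 ≤ p a b i)
    (hξ1 : ∑ s, ξ s = 1) (hp1 : ∀ a, ∑ b, ∑ i, p a b i = 1) :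
    ∃ L, ∀ k,
      |log (wordNormGeomMean A p ξ (k + 1)) - log (wordNormGeomMean A p ξ k)| ≤ L := by
  obtain ⟨L, hL⟩ := Finite.exists_le fun i =>
    |log ‖A i‖| + |log ‖(↑(hA i).unit⁻¹ : Matrix (Fin n) (Fin n) ℝ)‖|
  refine ⟨L, fun k => ?_⟩
  simp only [log_wordNormGeomMean p ξ hA]
  refine abs_sum_muWord_succ_mul_sub_le p ξ hξ0 hp0 hξ1 hp1 (fun k w => log ‖Aw A k w‖)
    (fun k v => ?_) k
  exact (abs_log_norm_unit_mul_sub_le (hA _).unit (isUnit_Aw hA k _).ne_zero).trans (hL _)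

end Increments

/-- K-th root scaling of the probabilistic spectral radius under
the K-step lift: if all the matrices are invertible, then
`ρ₀(A^K, G^K, ξ) = ρ₀(A, G, ξ)^K`. -/
theorem rho0_step_lift_pow
    {S : Type*} [Fintype S] [DecidableEq S] (M n : ℕ)
    (A : Fin M → Matrix (Fin n) (Fin n) ℝ)
    (hinv : ∀ i, IsUnit (A i))
    (p : S → S → Fin M → ℝ)
    (hnonneg : ∀ a b i, 0 ≤ p a b i)
    (hstoch : ∀ a : S, ∑ b : S, ∑ i : Fin M, p a b i = 1)
    (ξ : S → ℝ) (hξ0 : ∀ s, 0 ≤ ξ s) (hξ1 : ∑ s : S, ξ s = 1)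
    (K : ℕ) (hK : 1 ≤ K) :
    rho0 (fun w : Fin K → Fin M => Aw A K w) (pK p K) ξ
      = rho0 A p ξ ^ K := by
  rw [rho0_eq_limsup_wordNormGeomMean, rho0_eq_limsup_wordNormGeomMean]
  simp only [wordNormGeomMean_blockLift]
  rcases Nat.eq_zero_or_pos n with hn | hn
  · simp only [wordNormGeomMean_of_dim_zero A p ξ hn hξ1 hstoch]
    rw [limsup_zero_rpow_one_div, zero_pow (by omega)]
  · have := NeZero.of_pos hn
    obtain ⟨L, hL⟩ :=
      exists_abs_log_wordNormGeomMean_succ_sub_le p ξ hinv hξ0 hnonneg hξ1 hstoch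
    exact limsup_rpow_one_div_mul_eq_pow (wordNormGeomMean_pos p ξ hinv) hL hK
end
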